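/- arXiv:astro-ph/0605643 — 3 statements merged into one kernel-verified Lean document; each statement's English description precedes it below -/
import Mathlib

section
/- Suppose the input field is an nth-order azimuthal harmonic, E_in(r,θ) = E_i(r) e^{i n θ} for some integer n, and assume the S-Huygens integrand (r,θ) ↦ K(r,r̃) e^{-2πi r r̃ cos(θ-θ̃)/(λ S₀(r,r̃))} E_in(r,θ) A_in(r) r is integrable over (0,∞) × (0,2π) for each r̃ > 0. Then the output field of the S-Huygens propagation is also an nth-order azimuthal harmonic: E_out(r̃,θ̃) = E_o(r̃) e^{i n θ̃}, where E_o(r̃) = (2π (-1)ⁿ i^{n-1} A_out(r̃)/(λ Z)) ∫₀^∞ K(r,r̃) E_i(r) Jₙ(2π r r̃/(λ S₀(r,r̃))) A_in(r) r dr. -/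
/-! For an azimuthal harmonic input, the angular integral in the S-Huygens propagation is the
Bessel integral `∫₀^{2π} e^{-i x cos(θ - θ̃)} e^{i n θ} dθ` with `x = 2π r r̃/(λ S₀)`. Since the
integrand is `2π`-periodic, the substitution `θ ↦ θ + θ̃` turns it into `e^{i n θ̃}` times the
same integral at `θ̃ = 0`, and `θ ↦ θ + π` turns `e^{-i x cos θ}` into `e^{i x cos θ}` at the
cost of a factor `(-1)ⁿ`; so it equals `2π iⁿ (-1)ⁿ Jₙ(x) e^{i n θ̃}`. The remaining radial
integral is then `e^{i n θ̃}` times the one defining `E_o(r̃)`, and `iⁿ / i = i^{n-1}`.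
-/

open MeasureTheory

/-- The Bessel function of integer order `n`, defined by its integral representation
`Jₙ(x) = (1/(2π iⁿ)) ∫₀^{2π} e^{i x cos θ} e^{i n θ} dθ`. -/
noncomputable def besselJ (n : ℤ) (x : ℝ) : ℂ :=
  (1 / (2 * (Real.pi : ℂ) * Complex.I ^ n)) *
    ∫ θ in (0:ℝ)..(2 * Real.pi),
      Complex.exp (Complex.I * (x : ℂ) * (Real.cos θ : ℂ)) *
        Complex.exp (Complex.I * (n : ℂ) * (θ : ℂ))

/-- The data specifying an S-Huygens propagation step: continuous surface height
functions `h`, `ht`, a wavelength `lam > 0`, a plane separation `Z > 0`, a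
refractive index `nu`, and input/output apodizers `Ain`, `Aout`. -/
structure SHuygensStep where
  h : ℝ → ℝ
  ht : ℝ → ℝ
  h_cont : Continuous h
  ht_cont : Continuous ht
  lam : ℝ
  lam_pos : 0 < lam
  Z : ℝ
  Z_pos : 0 < Z
  nu : ℝ
  Ain : ℝ → ℝ
  Aout : ℝ → ℝ

/-- `S₀(r,r̃) = √((r - r̃)² + (h(r) - h̃(r̃))²)`. -/
noncomputable def S0 (P : SHuygensStep) (r rt : ℝ) : ℝ :=
  Real.sqrt ((r - rt) ^ 2 + (P.h r - P.ht rt) ^ 2)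

/-- `K(r,r̃) = exp(2πi (r r̃/S₀ + S₀ + |ν|(h̃(r̃) - h(r)))/λ)`. -/
noncomputable def Kker (P : SHuygensStep) (r rt : ℝ) : ℂ :=
  Complex.exp (2 * (Real.pi : ℂ) * Complex.I *
    (((r * rt / S0 P r rt + S0 P r rt + |P.nu| * (P.ht rt - P.h r)) / P.lam : ℝ) : ℂ))

/-- The S-Huygens propagation of an input field `Ein` (in polar coordinates):
`E_out(r̃,θ̃) = (A_out(r̃)/(iλZ)) ∫₀^∞ K(r,r̃) [∫₀^{2π} e^{-2πi r r̃ cos(θ-θ̃)/(λ S₀(r,r̃))}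
E_in(r,θ) dθ] A_in(r) r dr`. -/
noncomputable def propagate (P : SHuygensStep) (Ein : ℝ → ℝ → ℂ) (rt θt : ℝ) : ℂ :=
  ((P.Aout rt : ℂ) / (Complex.I * (P.lam : ℂ) * (P.Z : ℂ))) *
    ∫ r in Set.Ioi (0:ℝ),
      Kker P r rt *
        (∫ θ in (0:ℝ)..(2 * Real.pi),
          Complex.exp (-(2 * (Real.pi : ℂ) * Complex.I) *
            ((r * rt * Real.cos (θ - θt) : ℝ) : ℂ) / ((P.lam * S0 P r rt : ℝ) : ℂ)) *
            Ein r θ) *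
        (P.Ain r : ℂ) * (r : ℂ)

theorem Function.Periodic.intervalIntegral_comp_add_right_eq {E : Type*} [NormedAddCommGroup E]
    [NormedSpace ℝ E] {f : ℝ → E} {T : ℝ} (hf : Function.Periodic f T) (a t : ℝ) :
    ∫ x in t..t + T, f (x + a) = ∫ x in t..t + T, f x := by
  rw [intervalIntegral.integral_comp_add_right, add_right_comm, hf.intervalIntegral_add_eq]

lemma periodic_exp_mul_cos_mul_exp (x : ℝ) (n : ℤ) : Function.Periodic
    (fun θ : ℝ => Complex.exp (Complex.I * (x : ℂ) * (Real.cos θ : ℂ)) *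
      Complex.exp (Complex.I * (n : ℂ) * (θ : ℂ))) (2 * Real.pi) := by
  intro θ
  dsimp only
  rw [Real.cos_add_two_pi,
    show Complex.I * (n : ℂ) * ((θ + 2 * Real.pi : ℝ) : ℂ)
      = Complex.I * n * θ + n * (2 * Real.pi * Complex.I) by push_cast; ring,
    Complex.exp_add, Complex.exp_int_mul_two_pi_mul_I, mul_one]

lemma integral_exp_mul_cos_mul_exp (x : ℝ) (n : ℤ) :
    ∫ θ in (0:ℝ)..(2 * Real.pi),
        Complex.exp (Complex.I * (x : ℂ) * (Real.cos θ : ℂ)) *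
          Complex.exp (Complex.I * (n : ℂ) * (θ : ℂ))
      = 2 * (Real.pi : ℂ) * Complex.I ^ n * besselJ n x := by
  have hne : 2 * (Real.pi : ℂ) * Complex.I ^ n ≠ 0 :=
    mul_ne_zero (by simp [Real.pi_ne_zero]) (zpow_ne_zero n Complex.I_ne_zero)
  rw [besselJ, ← mul_assoc, mul_one_div_cancel hne, one_mul]

lemma integral_exp_mul_cos_sub_mul_exp (x a : ℝ) (n : ℤ) :
    ∫ θ in (0:ℝ)..(2 * Real.pi),
        Complex.exp (Complex.I * (x : ℂ) * (Real.cos (θ - a) : ℂ)) *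
          Complex.exp (Complex.I * (n : ℂ) * (θ : ℂ))
      = 2 * (Real.pi : ℂ) * Complex.I ^ n * besselJ n x *
          Complex.exp (Complex.I * (n : ℂ) * (a : ℂ)) := by
  set G : ℝ → ℂ := fun θ => Complex.exp (Complex.I * (x : ℂ) * (Real.cos θ : ℂ)) *
    Complex.exp (Complex.I * (n : ℂ) * (θ : ℂ))
  have hshift : ∀ θ : ℝ, Complex.exp (Complex.I * (x : ℂ) * (Real.cos (θ - a) : ℂ)) *
        Complex.exp (Complex.I * (n : ℂ) * (θ : ℂ))
      = G (θ + -a) * Complex.exp (Complex.I * (n : ℂ) * (a : ℂ)) := by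
    intro θ
    simp only [G, ← sub_eq_add_neg, ← Complex.exp_add]
    congr 1
    push_cast
    ring
  simp_rw [hshift]
  rw [intervalIntegral.integral_mul_const, ← zero_add (2 * Real.pi),
    (periodic_exp_mul_cos_mul_exp x n).intervalIntegral_comp_add_right_eq, zero_add,
    integral_exp_mul_cos_mul_exp]

lemma besselJ_neg (n : ℤ) (x : ℝ) : besselJ n (-x) = (-1) ^ n * besselJ n x := by
  have hsign : Complex.exp (-(Complex.I * (n : ℂ) * (Real.pi : ℂ))) = (-1 : ℂ) ^ n := by
    rw [show -(Complex.I * (n : ℂ) * (Real.pi : ℂ)) = ((-n : ℤ) : ℂ) * (Real.pi * Complex.I) by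
        push_cast; ring,
      Complex.exp_int_mul, Complex.exp_pi_mul_I, zpow_neg, ← inv_zpow, inv_neg, inv_one]
  set G : ℝ → ℂ := fun θ => Complex.exp (Complex.I * (x : ℂ) * (Real.cos θ : ℂ)) *
    Complex.exp (Complex.I * (n : ℂ) * (θ : ℂ))
  have hshift : ∀ θ : ℝ, Complex.exp (Complex.I * ((-x : ℝ) : ℂ) * (Real.cos θ : ℂ)) *
        Complex.exp (Complex.I * (n : ℂ) * (θ : ℂ))
      = G (θ + Real.pi) * Complex.exp (-(Complex.I * (n : ℂ) * (Real.pi : ℂ))) := by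
    intro θ
    simp only [G, Real.cos_add_pi, mul_assoc, ← Complex.exp_add]
    congr 1
    push_cast
    ring
  simp only [besselJ]
  simp_rw [hshift]
  rw [intervalIntegral.integral_mul_const, ← zero_add (2 * Real.pi),
    (periodic_exp_mul_cos_mul_exp x n).intervalIntegral_comp_add_right_eq, hsign]
  ring

lemma integral_exp_neg_cos_sub_mul_harmonic (r rt d θt : ℝ) (n : ℤ) (e : ℂ) :
    ∫ θ in (0:ℝ)..(2 * Real.pi),
        Complex.exp (-(2 * (Real.pi : ℂ) * Complex.I) *
          ((r * rt * Real.cos (θ - θt) : ℝ) : ℂ) / (d : ℂ)) *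
          (e * Complex.exp (Complex.I * (n : ℂ) * (θ : ℂ)))
      = e * (2 * (Real.pi : ℂ) * Complex.I ^ n * (-1) ^ n *
          besselJ n (2 * Real.pi * r * rt / d) *
          Complex.exp (Complex.I * (n : ℂ) * (θt : ℂ))) := by
  have hphase : ∀ θ : ℝ, -(2 * (Real.pi : ℂ) * Complex.I) *
        ((r * rt * Real.cos (θ - θt) : ℝ) : ℂ) / (d : ℂ)
      = Complex.I * ((-(2 * Real.pi * r * rt / d) : ℝ) : ℂ) * (Real.cos (θ - θt) : ℂ) := by
    intro θ
    push_cast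
    ring
  simp_rw [hphase, mul_left_comm _ e]
  rw [intervalIntegral.integral_const_mul, integral_exp_mul_cos_sub_mul_exp, besselJ_neg]
  ring

theorem sHuygens_azimuthal_harmonic_general (P : SHuygensStep) (n : ℤ) (Ei : ℝ → ℂ) :
    ∀ rt : ℝ, 0 < rt → ∀ θt : ℝ,
      propagate P (fun r θ => Ei r * Complex.exp (Complex.I * (n : ℂ) * (θ : ℂ))) rt θt =
        (2 * (Real.pi : ℂ) * (-1) ^ n * Complex.I ^ (n - 1) * (P.Aout rt : ℂ) /
            ((P.lam : ℂ) * (P.Z : ℂ))) *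
          (∫ r in Set.Ioi (0:ℝ),
            Kker P r rt * Ei r *
              besselJ n (2 * Real.pi * r * rt / (P.lam * S0 P r rt)) *
              (P.Ain r : ℂ) * (r : ℂ)) *
          Complex.exp (Complex.I * (n : ℂ) * (θt : ℂ)) := by
  intro rt _ θt
  have hradial : ∀ r : ℝ, Kker P r rt *
        (∫ θ in (0:ℝ)..(2 * Real.pi),
          Complex.exp (-(2 * (Real.pi : ℂ) * Complex.I) *
            ((r * rt * Real.cos (θ - θt) : ℝ) : ℂ) / ((P.lam * S0 P r rt : ℝ) : ℂ)) *
            (Ei r * Complex.exp (Complex.I * (n : ℂ) * (θ : ℂ)))) * (P.Ain r : ℂ) * (r : ℂ)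
      = (2 * (Real.pi : ℂ) * Complex.I ^ n * (-1) ^ n *
            Complex.exp (Complex.I * (n : ℂ) * (θt : ℂ))) *
          (Kker P r rt * Ei r * besselJ n (2 * Real.pi * r * rt / (P.lam * S0 P r rt)) *
            (P.Ain r : ℂ) * (r : ℂ)) := by
    intro r
    rw [integral_exp_neg_cos_sub_mul_harmonic]
    ring
  rw [propagate, integral_congr_ae (Filter.Eventually.of_forall hradial), integral_const_mul]
  simp only [zpow_sub₀ Complex.I_ne_zero, zpow_one, div_eq_mul_inv, mul_inv, Complex.inv_I]
  ring

/-- If the input field is an `n`th-order azimuthal harmonic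
`E_in(r,θ) = E_i(r) e^{i n θ}`, and the S-Huygens integrand is integrable over
`(0,∞) × (0,2π)` for each `r̃ > 0`, then the output field is also an `n`th-order
azimuthal harmonic, `E_out(r̃,θ̃) = E_o(r̃) e^{i n θ̃}`, with radial part
`E_o(r̃) = (2π (-1)ⁿ i^{n-1} A_out(r̃)/(λZ)) ∫₀^∞ K(r,r̃) E_i(r)
Jₙ(2π r r̃/(λ S₀(r,r̃))) A_in(r) r dr`. -/
theorem sHuygens_azimuthal_harmonic (P : SHuygensStep) (n : ℤ) (Ei : ℝ → ℂ)
    (hint : ∀ rt : ℝ, 0 < rt → ∀ θt : ℝ,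
      IntegrableOn
        (fun p : ℝ × ℝ =>
          Kker P p.1 rt *
            (Complex.exp (-(2 * (Real.pi : ℂ) * Complex.I) *
              ((p.1 * rt * Real.cos (p.2 - θt) : ℝ) : ℂ) /
                ((P.lam * S0 P p.1 rt : ℝ) : ℂ)) *
              (Ei p.1 * Complex.exp (Complex.I * (n : ℂ) * (p.2 : ℂ)))) *
            (P.Ain p.1 : ℂ) * (p.1 : ℂ))
        (Set.Ioi (0:ℝ) ×ˢ Set.Ioo (0:ℝ) (2 * Real.pi))) :
    ∀ rt : ℝ, 0 < rt → ∀ θt : ℝ,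
      propagate P (fun r θ => Ei r * Complex.exp (Complex.I * (n : ℂ) * (θ : ℂ))) rt θt =
        (2 * (Real.pi : ℂ) * (-1) ^ n * Complex.I ^ (n - 1) * (P.Aout rt : ℂ) /
            ((P.lam : ℂ) * (P.Z : ℂ))) *
          (∫ r in Set.Ioi (0:ℝ),
            Kker P r rt * Ei r *
              besselJ n (2 * Real.pi * r * rt / (P.lam * S0 P r rt)) *
              (P.Ain r : ℂ) * (r : ℂ)) *
          Complex.exp (Complex.I * (n : ℂ) * (θt : ℂ)) :=
  sHuygens_azimuthal_harmonic_general P n Ei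
end

section
/- Consider a cascade consisting of a first S-Huygens propagation step, followed by pointwise multiplication of the field by a radially symmetric mask M(r̃) (a function of radius only), followed by a second S-Huygens propagation step (with its own surface functions, separation, index and apodizers). If the input field to the cascade is an nth-order azimuthal harmonic E_i(r) e^{i n θ} for some integer n, and all the intermediate S-Huygens integrands are integrable, then the output field of the cascade is again an nth-order azimuthal harmonic, i.e., of the form F(r̂) e^{i n θ̂} for some radial function F. -/
open MeasureTheory

/-! The angular kernel of an S-Huygens step depends on the angles only through `cos (θ - θ̃)`, so
the step commutes with rotations of the plane. For an input `E(r) e^{inθ}` the substitution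
`θ ↦ θ + θ̃` in the angular integral pulls out the phase `e^{inθ̃}`, which then factors out of the
radial integral as well; a radial mask does not touch the phase, so the harmonic order survives the
whole cascade. -/

open Complex Real

theorem Function.Periodic.intervalIntegral_comp_sub_mul_exp {φ : ℝ → ℂ}
    (hφ : Function.Periodic φ (2 * π)) (n : ℤ) (θ₀ : ℝ) :
    ∫ θ in (0:ℝ)..2 * π, φ (θ - θ₀) * cexp (I * n * θ)
      = cexp (I * n * θ₀) * ∫ θ in (0:ℝ)..2 * π, φ θ * cexp (I * n * θ) := by
  set g : ℝ → ℂ := fun u => φ u * cexp (I * n * (u + θ₀))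
  have hg : Function.Periodic g (2 * π) := by
    intro u
    have hphase : I * n * ((u + 2 * π : ℝ) + θ₀ : ℂ) = I * n * (u + θ₀) + n * (2 * π * I) := by
      push_cast; ring
    simp only [g, hφ u, hphase, Complex.exp_add, exp_int_mul_two_pi_mul_I, mul_one]
  calc ∫ θ in (0:ℝ)..2 * π, φ (θ - θ₀) * cexp (I * n * θ)
      = ∫ θ in (0:ℝ)..2 * π, g (θ - θ₀) := by simp only [g, ofReal_sub, sub_add_cancel]
    _ = ∫ u in (0:ℝ)..2 * π, g u := by
      rw [intervalIntegral.integral_comp_sub_right]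
      simpa [neg_add_eq_sub] using hg.intervalIntegral_add_eq (-θ₀) 0
    _ = cexp (I * n * θ₀) * ∫ θ in (0:ℝ)..2 * π, φ θ * cexp (I * n * θ) := by
      rw [← intervalIntegral.integral_const_mul]
      congr with u
      simp only [g, mul_add, Complex.exp_add]
      ring

def IsAzimuthalHarmonic (n : ℤ) (E : ℝ → ℝ → ℂ) : Prop :=
  ∃ F : ℝ → ℂ, E = fun r (θ : ℝ) => F r * cexp (I * n * θ)

namespace IsAzimuthalHarmonic

variable {n : ℤ} {E : ℝ → ℝ → ℂ}

theorem of_radial (F : ℝ → ℂ) : IsAzimuthalHarmonic n fun r (θ : ℝ) => F r * cexp (I * n * θ) :=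
  ⟨F, rfl⟩

theorem mul_radial (hE : IsAzimuthalHarmonic n E) (M : ℝ → ℂ) :
    IsAzimuthalHarmonic n fun r θ => M r * E r θ := by
  obtain ⟨F, rfl⟩ := hE
  exact ⟨fun r => M r * F r, by simp only [mul_assoc]⟩

theorem propagate (hE : IsAzimuthalHarmonic n E) (P : SHuygensStep) :
    IsAzimuthalHarmonic n (_root_.propagate P E) := by
  obtain ⟨F, rfl⟩ := hE
  refine ⟨fun rt => _root_.propagate P (fun r (θ : ℝ) => F r * cexp (I * n * θ)) rt 0, ?_⟩
  ext rt θt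
  -- `θ - 0` is kept unsimplified so that the right side is literally the integrand at `θ̃ = 0`.
  have hangular (r : ℝ) :
      ∫ θ in (0:ℝ)..2 * π, cexp (-(2 * π * I) * ((r * rt * Real.cos (θ - θt) : ℝ) : ℂ) /
          ((P.lam * S0 P r rt : ℝ) : ℂ)) * (F r * cexp (I * n * θ))
        = cexp (I * n * θt) * ∫ θ in (0:ℝ)..2 * π,
          cexp (-(2 * π * I) * ((r * rt * Real.cos (θ - 0) : ℝ) : ℂ) /
            ((P.lam * S0 P r rt : ℝ) : ℂ)) * (F r * cexp (I * n * θ)) := by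
    have hφ : Function.Periodic (fun u => cexp (-(2 * π * I) * ((r * rt * Real.cos u : ℝ) : ℂ) /
        ((P.lam * S0 P r rt : ℝ) : ℂ))) (2 * π) := fun u => by
      simp only [Real.cos_add_two_pi]
    simp only [sub_zero, mul_left_comm _ (F r), intervalIntegral.integral_const_mul,
      hφ.intervalIntegral_comp_sub_mul_exp]
  simp only [_root_.propagate, hangular]
  rw [mul_assoc (_ / _) (∫ _ in _, _) (cexp _), ← integral_mul_const]
  congr with r
  ring

end IsAzimuthalHarmonic

theorem sHuygens_cascade_azimuthal_harmonic_general (P1 P2 : SHuygensStep) (M : ℝ → ℂ)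
    (n : ℤ) (Ei : ℝ → ℂ) :
    ∃ F : ℝ → ℂ, ∀ rh : ℝ, 0 < rh → ∀ θh : ℝ,
      propagate P2
          (fun r θ => M r *
            propagate P1
              (fun r' θ' => Ei r' * Complex.exp (Complex.I * (n : ℂ) * (θ' : ℂ)))
              r θ)
          rh θh
        = F rh * Complex.exp (Complex.I * (n : ℂ) * (θh : ℂ)) := by
  obtain ⟨F, hF⟩ := (((IsAzimuthalHarmonic.of_radial Ei).propagate P1).mul_radial M).propagate P2
  exact ⟨F, fun rh _ θh => congr_fun₂ hF rh θh⟩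

/-- Cascade: a first S-Huygens step, followed by multiplication by a radially
symmetric mask `M(r̃)`, followed by a second S-Huygens step.  If the input field to
the cascade is an `n`th-order azimuthal harmonic `E_i(r) e^{i n θ}` and all the
intermediate S-Huygens integrands are integrable, then the output field of the
cascade is again an `n`th-order azimuthal harmonic, of the form `F(r̂) e^{i n θ̂}`. -/
theorem sHuygens_cascade_azimuthal_harmonic (P1 P2 : SHuygensStep) (M : ℝ → ℂ)
    (n : ℤ) (Ei : ℝ → ℂ)
    (hint1 : ∀ rt : ℝ, 0 < rt → ∀ θt : ℝ,
      IntegrableOn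
        (fun p : ℝ × ℝ =>
          Kker P1 p.1 rt *
            (Complex.exp (-(2 * (Real.pi : ℂ) * Complex.I) *
              ((p.1 * rt * Real.cos (p.2 - θt) : ℝ) : ℂ) /
                ((P1.lam * S0 P1 p.1 rt : ℝ) : ℂ)) *
              (Ei p.1 * Complex.exp (Complex.I * (n : ℂ) * (p.2 : ℂ)))) *
            (P1.Ain p.1 : ℂ) * (p.1 : ℂ))
        (Set.Ioi (0:ℝ) ×ˢ Set.Ioo (0:ℝ) (2 * Real.pi)))
    (hint2 : ∀ rh : ℝ, 0 < rh → ∀ θh : ℝ,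
      IntegrableOn
        (fun p : ℝ × ℝ =>
          Kker P2 p.1 rh *
            (Complex.exp (-(2 * (Real.pi : ℂ) * Complex.I) *
              ((p.1 * rh * Real.cos (p.2 - θh) : ℝ) : ℂ) /
                ((P2.lam * S0 P2 p.1 rh : ℝ) : ℂ)) *
              (M p.1 *
                propagate P1
                  (fun r θ => Ei r * Complex.exp (Complex.I * (n : ℂ) * (θ : ℂ)))
                  p.1 p.2)) *
            (P2.Ain p.1 : ℂ) * (p.1 : ℂ))
        (Set.Ioi (0:ℝ) ×ˢ Set.Ioo (0:ℝ) (2 * Real.pi))) :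
    ∃ F : ℝ → ℂ, ∀ rh : ℝ, 0 < rh → ∀ θh : ℝ,
      propagate P2
          (fun r θ => M r *
            propagate P1
              (fun r' θ' => Ei r' * Complex.exp (Complex.I * (n : ℂ) * (θ' : ℂ)))
              r θ)
          rh θh
        = F rh * Complex.exp (Complex.I * (n : ℂ) * (θh : ℂ)) :=
  sHuygens_cascade_azimuthal_harmonic_general P1 P2 M n Ei
end

section
/- For every real x and every real θ, the Jacobi–Anger expansion holds: e^{i x cos θ} = Σ_{k = -∞}^{∞} iᵏ Jₖ(x) e^{i k θ}, where the doubly infinite series converges absolutely. Equivalently, iᵏ Jₖ(x) is the kth Fourier coefficient of the 2π-periodic function θ ↦ e^{i x cos θ}. -/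
/-! The function `θ ↦ e^{i x cos θ}` is smooth and `2π`-periodic, so two integrations by parts
bound its Fourier coefficients by `O(1/k²)`; the Fourier series therefore converges absolutely,
and then necessarily to the function itself. As `cos` is even, the `k`th and `(-k)`th coefficients
agree, and the `(-k)`th coefficient is `iᵏ Jₖ(x)` by the very definition of `Jₖ`. -/

open Complex Function intervalIntegral
open scoped Real Interval

theorem Function.Periodic.deriv {𝕜 F : Type*} [NontriviallyNormedField 𝕜] [NormedAddCommGroup F]
    [NormedSpace 𝕜 F] {f : 𝕜 → F} {T : 𝕜} (hf : Periodic f T) : Periodic (deriv f) T :=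
  fun x => by rw [← deriv_comp_add_const, funext hf]

section FourierDecay

theorem norm_fourierCoeffOn_le {E : Type*} [NormedAddCommGroup E] [NormedSpace ℂ E]
    {a b : ℝ} (hab : a < b) {f : ℝ → E} {C : ℝ} (hC : ∀ x ∈ Ι a b, ‖f x‖ ≤ C) (n : ℤ) :
    ‖fourierCoeffOn hab f n‖ ≤ C := by
  have hba : 0 < b - a := sub_pos.mpr hab
  have hint : ‖∫ x in a..b, fourier (-n) (x : AddCircle (b - a)) • f x‖ ≤ C * |b - a| :=
    norm_integral_le_of_norm_le_const fun x hx => by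
      rw [norm_smul, show ‖fourier (-n) (x : AddCircle (b - a))‖ = 1 from Circle.norm_coe _,
        one_mul]
      exact hC x hx
  rw [fourierCoeffOn_eq_integral, norm_smul, Real.norm_eq_abs, abs_of_pos (by positivity)]
  calc 1 / (b - a) * _ ≤ 1 / (b - a) * (C * |b - a|) := by gcongr
    _ = C := by rw [abs_of_pos hba]; field_simp

variable {T : ℝ} (hT : 0 < T)

theorem fourierCoeffOn_deriv_of_periodic {f : ℝ → ℂ} (hf : Differentiable ℝ f)
    (hf' : IntervalIntegrable (deriv f) MeasureTheory.volume 0 T) (hper : Periodic f T)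
    {n : ℤ} (hn : n ≠ 0) :
    fourierCoeffOn hT (deriv f) n = 2 * π * I * n / T * fourierCoeffOn hT f n := by
  have hT' : (T : ℂ) ≠ 0 := ofReal_ne_zero.mpr hT.ne'
  have hn' : (n : ℂ) ≠ 0 := Int.cast_ne_zero.mpr hn
  rw [fourierCoeffOn_of_hasDerivAt hT hn (fun x _ => (hf x).hasDerivAt) hf',
    show f T = f 0 by simpa using hper 0, sub_self, mul_zero, zero_sub]
  field_simp
  push_cast
  ring

theorem norm_fourierCoeffOn_le_of_contDiff_two {f : ℝ → ℂ} (hf : ContDiff ℝ 2 f)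
    (hper : Periodic f T) :
    ∃ C, ∀ n : ℤ, n ≠ 0 → ‖fourierCoeffOn hT f n‖ ≤ C / (n : ℝ) ^ 2 := by
  have hf1 : ContDiff ℝ 1 (deriv f) := (contDiff_succ_iff_deriv.mp hf).2.2
  obtain ⟨C, hC⟩ := isCompact_uIcc.exists_bound_of_continuousOn
    (hf1.continuous_deriv le_rfl).continuousOn (s := Set.uIcc 0 T)
  refine ⟨(T / (2 * π)) ^ 2 * C, fun n hn => ?_⟩
  have hcoeff := fourierCoeffOn_deriv_of_periodic hT (hf1.differentiable one_ne_zero)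
    ((hf1.continuous_deriv le_rfl).intervalIntegrable _ _) hper.deriv hn
  rw [fourierCoeffOn_deriv_of_periodic hT (hf.differentiable two_ne_zero)
    ((hf.continuous_deriv (by norm_num)).intervalIntegrable _ _) hper hn] at hcoeff
  have hbound := norm_fourierCoeffOn_le hT (fun x hx => hC x (Set.uIoc_subset_uIcc hx)) n
  have hnorm : ‖2 * π * I * n / T‖ = 2 * π * |(n : ℝ)| / T := by
    simp [abs_of_pos hT, abs_of_pos Real.pi_pos]
  rw [hcoeff, norm_mul, norm_mul, hnorm, ← mul_assoc, ← sq, div_pow, mul_pow, sq_abs] at hbound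
  rw [le_div_iff₀ (by positivity)]
  calc ‖fourierCoeffOn hT f n‖ * n ^ 2
      = (T / (2 * π)) ^ 2 * ((2 * π) ^ 2 * n ^ 2 / T ^ 2 * ‖fourierCoeffOn hT f n‖) := by
        field_simp
    _ ≤ (T / (2 * π)) ^ 2 * C := by gcongr

theorem summable_norm_fourierCoeffOn_of_contDiff_two {f : ℝ → ℂ} (hf : ContDiff ℝ 2 f)
    (hper : Periodic f T) : Summable fun n : ℤ => ‖fourierCoeffOn hT f n‖ := by
  obtain ⟨C, hC⟩ := norm_fourierCoeffOn_le_of_contDiff_two hT hf hper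
  refine ((Real.summable_one_div_int_pow.mpr one_lt_two).mul_left C).of_norm_bounded_eventually ?_
  filter_upwards [Filter.eventually_cofinite_ne 0] with n hn
  simpa [div_eq_mul_inv] using hC n hn

end FourierDecay

section Circle

variable {T : ℝ}

def Function.Periodic.continuousLift {α : Type*} [TopologicalSpace α] {f : ℝ → α}
    (hper : Periodic f T) (hf : Continuous f) : C(AddCircle T, α) :=
  ⟨hper.lift, hf.quotient_liftOn' _⟩

variable [hT : Fact (0 < T)]

theorem fourierCoeff_continuousLift {E : Type*} [NormedAddCommGroup E] [NormedSpace ℂ E]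
    {f : ℝ → E} (hper : Periodic f T) (hf : Continuous f) (n : ℤ) :
    fourierCoeff (hper.continuousLift hf) n = fourierCoeffOn hT.out f n := by
  rw [fourierCoeff_eq_intervalIntegral _ n 0, fourierCoeffOn_eq_integral, zero_add, sub_zero]
  rfl

theorem fourierCoeff_neg_of_even {E : Type*} [NormedAddCommGroup E] [NormedSpace ℂ E]
    {f : AddCircle T → E} (hf : ∀ x, f (-x) = f x) (n : ℤ) :
    fourierCoeff f (-n) = fourierCoeff f n := by
  simp only [fourierCoeff]
  rw [← MeasureTheory.integral_neg_eq_self]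
  congr 1 with x
  rw [hf, fourier_apply, fourier_apply, smul_neg, neg_smul, neg_neg]

end Circle

instance : Fact (0 < 2 * π) := ⟨Real.two_pi_pos⟩

theorem fourier_coe_two_pi (n : ℤ) (θ : ℝ) :
    fourier n (θ : AddCircle (2 * π)) = exp (I * n * θ) := by
  rw [fourier_coe_apply]
  congr 1
  push_cast
  field_simp

theorem fourierCoeff_two_pi_eq_integral (f : AddCircle (2 * π) → ℂ) (n : ℤ) :
    fourierCoeff f n = 1 / (2 * π : ℂ) * ∫ θ in (0 : ℝ)..2 * π, f θ * exp (-(I * n * θ)) := by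
  rw [fourierCoeff_eq_intervalIntegral f n 0, zero_add, real_smul]
  simp_rw [smul_eq_mul, fourier_coe_two_pi, mul_comm (exp _)]
  push_cast
  ring_nf

noncomputable def expICos (x θ : ℝ) : ℂ := exp (I * x * Real.cos θ)

theorem expICos_periodic (x : ℝ) : Periodic (expICos x) (2 * π) := fun θ => by
  simp [expICos, Real.cos_add_two_pi]

theorem expICos_neg (x θ : ℝ) : expICos x (-θ) = expICos x θ := by
  simp [expICos, Real.cos_neg]

theorem contDiff_expICos (x : ℝ) : ContDiff ℝ 2 (expICos x) :=
  (contDiff_const.mul (ofRealCLM.contDiff.comp Real.contDiff_cos)).cexp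

noncomputable def expICosCircle (x : ℝ) : C(AddCircle (2 * π), ℂ) :=
  (expICos_periodic x).continuousLift (contDiff_expICos x).continuous

theorem expICosCircle_neg (x : ℝ) (t : AddCircle (2 * π)) :
    expICosCircle x (-t) = expICosCircle x t := by
  induction t using QuotientAddGroup.induction_on with
  | H θ => exact expICos_neg x θ

theorem summable_norm_fourierCoeff_expICosCircle (x : ℝ) :
    Summable fun n : ℤ => ‖fourierCoeff (expICosCircle x) n‖ := by
  simp_rw [expICosCircle, fourierCoeff_continuousLift]
  exact summable_norm_fourierCoeffOn_of_contDiff_two _ (contDiff_expICos x) (expICos_periodic x)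

theorem I_zpow_mul_besselJ (x : ℝ) (k : ℤ) :
    I ^ k * besselJ k x = fourierCoeff (expICosCircle x) k :=
  calc I ^ k * besselJ k x
      = 1 / (2 * π : ℂ) * ∫ θ in (0 : ℝ)..2 * π, expICos x θ * exp (-(I * (-k : ℤ) * θ)) := by
        rw [besselJ, ← mul_assoc]
        congr 1
        · field_simp [zpow_ne_zero k I_ne_zero]
        · simp only [expICos, Int.cast_neg, mul_neg, neg_mul, neg_neg]
    _ = fourierCoeff (expICosCircle x) (-k) := by
        rw [fourierCoeff_two_pi_eq_integral]
        rfl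
    _ = fourierCoeff (expICosCircle x) k := fourierCoeff_neg_of_even (expICosCircle_neg x) k

/-- The Jacobi–Anger expansion: for every real `x` and `θ`,
`e^{i x cos θ} = Σ_{k=-∞}^{∞} iᵏ Jₖ(x) e^{i k θ}`, the doubly infinite series
converging absolutely; equivalently, `iᵏ Jₖ(x)` is the `k`th Fourier coefficient of
the `2π`-periodic function `θ ↦ e^{i x cos θ}`. -/
theorem jacobi_anger (x θ : ℝ) :
    HasSum (fun k : ℤ => Complex.I ^ k * besselJ k x *
        Complex.exp (Complex.I * (k : ℂ) * (θ : ℂ)))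
      (Complex.exp (Complex.I * (x : ℂ) * (Real.cos θ : ℂ))) ∧
    Summable (fun k : ℤ => ‖Complex.I ^ k * besselJ k x *
        Complex.exp (Complex.I * (k : ℂ) * (θ : ℂ))‖) ∧
    ∀ k : ℤ, Complex.I ^ k * besselJ k x =
      (1 / (2 * (Real.pi : ℂ))) *
        ∫ θ' in (0:ℝ)..(2 * Real.pi),
          Complex.exp (Complex.I * (x : ℂ) * (Real.cos θ' : ℂ)) *
            Complex.exp (-(Complex.I * (k : ℂ) * (θ' : ℂ))) := by
  have hterm (k : ℤ) : I ^ k * besselJ k x * exp (I * k * θ) =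
      fourierCoeff (expICosCircle x) k • fourier k (θ : AddCircle (2 * π)) := by
    rw [I_zpow_mul_besselJ, fourier_coe_two_pi, smul_eq_mul]
  have hsum := summable_norm_fourierCoeff_expICosCircle x
  refine ⟨?_, ?_, fun k => by rw [I_zpow_mul_besselJ, fourierCoeff_two_pi_eq_integral]; rfl⟩
  · simp only [hterm]
    exact has_pointwise_sum_fourier_series_of_summable hsum.of_norm θ
  · simpa only [hterm, norm_smul, show ∀ k : ℤ, ‖fourier k (θ : AddCircle (2 * π))‖ = 1 from
      fun k => Circle.norm_coe _, mul_one] using hsum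
end
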